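/- arXiv:1104.4896 — 2 statements merged into one kernel-verified Lean document; each statement's English description precedes it below -/
import Mathlib

section
/- Fix a ∈ ℝ and let A ⊆ ℓ∞ consist of the constant sequence (a,a,a,…) together with all sequences x such that for some m ∈ ℕ and some infinite set S ⊆ ℕ, x_n = a + 1/m for n ∈ S and x_n = a otherwise. Then A is a closed uncountable subset of ℓ∞ and the only condensation point of A is the constant sequence (a,a,a,…). -/
/-!
Write `c` for the constant sequence `a`. The set is the union of the levels `rankTwoLevel a m`,
the sequences taking the value `a + 1/m` on an infinite set and `a` elsewhere. For `m ≥ 1` the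
level lies in the closed ball of radius `1/m` about `c`, is uncountable (it is parametrised by
the infinite subsets of `ℕ`), and any two of its points are at distance exactly `1/m`. So every
ball about `c` contains a whole level, while a ball of radius `r = dist p c / 3` about `p ≠ c`
misses every level with `1/m < 2r` and meets each of the finitely many others in at most one
point; this gives closedness and shows that `c` is the only condensation point.
-/

/-- The condensation derivative: the set of condensation points of `A`,
i.e. points every neighborhood of which meets `A` in an uncountable set. -/
def CD (X : Type*) [TopologicalSpace X] (A : Set X) : Set X :=
  {p | ∀ U ∈ nhds p, ¬(U ∩ A).Countable}

/-- The set of sequences equal to `a` off an infinite set `S`, where they equal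
`a + 1/m`, together with the constant sequence `a`. -/
def rankTwoSet (a : ℝ) : Set (lp (fun _ : ℕ => ℝ) ⊤) :=
  {x | (∀ n, x n = a) ∨
    ∃ m : ℕ, 0 < m ∧ ∃ S : Set ℕ, S.Infinite ∧
      (∀ n ∈ S, x n = a + 1 / (m : ℝ)) ∧ ∀ n ∉ S, x n = a}

open Set Filter Topology Metric
open scoped lp ENNReal

section Condensation

variable {X : Type*}

theorem exists_ball_inter_iUnion_finite {ι : Type*} [MetricSpace X] {c p : X} {D : ι → Set X}
    {ε : ι → ℝ} (hε : Tendsto ε cofinite (𝓝 0)) (hDc : ∀ i, D i ⊆ closedBall c (ε i))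
    (hDsep : ∀ i, (D i).Pairwise fun x y => ε i ≤ dist x y) (hp : p ≠ c) :
    ∃ r > 0, (ball p r ∩ ⋃ i, D i).Finite := by
  set r := dist p c / 3
  have hr : 0 < r := by have := dist_pos.mpr hp; positivity
  refine ⟨r, hr, ?_⟩
  have hempty : ∀ i, ε i < 2 * r → ball p r ∩ D i = ∅ := by
    intro i hi
    refine eq_empty_of_forall_notMem ?_
    rintro x ⟨hxp, hxD⟩
    have := dist_triangle p x c
    have := mem_closedBall.mp (hDc i hxD)
    rw [mem_ball'] at hxp
    have : dist p c = 3 * r := by ring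
    linarith
  have hsub : ∀ i, (ball p r ∩ D i).Subsingleton := by
    intro i x ⟨hxp, hxD⟩ y ⟨hyp, hyD⟩
    by_contra hxy
    by_cases hi : ε i < 2 * r
    · exact (hempty i hi).subset ⟨hxp, hxD⟩
    · have := hDsep i hxD hyD hxy
      have := dist_triangle_right x y p
      rw [mem_ball] at hxp hyp
      linarith
  have hfin : {i | ¬ε i < 2 * r}.Finite :=
    eventually_cofinite.mp (hε.eventually (gt_mem_nhds (by positivity)))
  rw [inter_iUnion]
  refine (hfin.biUnion fun i _ => (hsub i).finite).subset (iUnion_subset fun i => ?_)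
  by_cases hi : ε i < 2 * r
  · simp [hempty i hi]
  · exact subset_biUnion_of_mem (u := fun i => ball p r ∩ D i) hi

theorem isClosed_of_forall_notMem_exists_finite_inter [TopologicalSpace X] [T1Space X]
    {A : Set X} (h : ∀ p ∉ A, ∃ U ∈ 𝓝 p, (U ∩ A).Finite) : IsClosed A := by
  refine isOpen_compl_iff.mp (isOpen_iff_mem_nhds.mpr fun p hp => ?_)
  obtain ⟨U, hU, hfin⟩ := h p hp
  filter_upwards [hU, hfin.isClosed.isOpen_compl.mem_nhds fun hpF => hp hpF.2]
    with q hqU hqF hqA using hqF ⟨hqU, hqA⟩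

theorem mem_CD_of_tendsto {ι : Type*} {l : Filter ι} [l.NeBot] [PseudoMetricSpace X] {c : X}
    {A : Set X} {D : ι → Set X} {ε : ι → ℝ} (hε : Tendsto ε l (𝓝 0))
    (hDc : ∀ i, D i ⊆ closedBall c (ε i)) (hDA : ∀ i, D i ⊆ A)
    (hD : ∀ᶠ i in l, ¬(D i).Countable) : c ∈ CD X A := by
  intro U hU hcount
  obtain ⟨δ, hδ, hδU⟩ := Metric.mem_nhds_iff.mp hU
  obtain ⟨i, hiδ, hi⟩ := ((hε.eventually (gt_mem_nhds hδ)).and hD).exists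
  refine hi (hcount.mono fun x hx => ?_)
  exact ⟨hδU (closedBall_subset_ball hiδ (hDc i hx)), hDA i hx⟩

end Condensation

theorem not_countable_setOf_infinite : ¬{S : Set ℕ | S.Infinite}.Countable := fun h => by
  have : Countable (Set ℕ) := countable_univ_iff.mp <|
    (Countable.ofPred_finite.union h).mono fun S _ => S.finite_or_infinite
  obtain ⟨f, hf⟩ := exists_injective_nat (Set ℕ)
  exact Function.cantor_injective f hf

namespace lp

variable {ι E : Type*} [NormedAddCommGroup E]

theorem norm_apply_sub_le_dist (x y : ℓ^∞(ι, E)) (i : ι) : ‖x i - y i‖ ≤ dist x y := by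
  simpa [dist_eq_norm] using norm_apply_le_norm ENNReal.top_ne_zero (x - y) i

theorem dist_le_of_forall_norm_apply_sub_le {x y : ℓ^∞(ι, E)} {C : ℝ} (hC : 0 ≤ C)
    (h : ∀ i, ‖x i - y i‖ ≤ C) : dist x y ≤ C := by
  simpa [dist_eq_norm] using norm_le_of_forall_le (f := x - y) hC (by simpa using h)

end lp

noncomputable def constSeq (a : ℝ) : ℓ^∞(ℕ, ℝ) :=
  ⟨fun _ => a, memℓp_infty ⟨‖a‖, by rintro _ ⟨_, rfl⟩; rfl⟩⟩

@[simp]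
theorem constSeq_apply (a : ℝ) (n : ℕ) : constSeq a n = a := rfl

theorem eq_constSeq_iff {a : ℝ} {x : ℓ^∞(ℕ, ℝ)} : x = constSeq a ↔ ∀ n, x n = a :=
  ⟨fun h _ => h ▸ rfl, fun h => lp.ext (funext h)⟩

noncomputable def stepSeq (a t : ℝ) (S : Set ℕ) : ℓ^∞(ℕ, ℝ) :=
  ⟨fun n => a + S.indicator (fun _ => t) n, memℓp_infty <|
    (toFinite {‖a + t‖, ‖a‖}).bddAbove.mono <| by
      rintro _ ⟨n, rfl⟩
      by_cases hn : n ∈ S <;> simp [hn]⟩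

theorem stepSeq_apply_of_mem {a t : ℝ} {S : Set ℕ} {n : ℕ} (hn : n ∈ S) :
    stepSeq a t S n = a + t :=
  congrArg (a + ·) (indicator_of_mem hn _)

theorem stepSeq_apply_of_notMem {a t : ℝ} {S : Set ℕ} {n : ℕ} (hn : n ∉ S) :
    stepSeq a t S n = a :=
  (congrArg (a + ·) (indicator_of_notMem hn _)).trans (add_zero a)

theorem stepSeq_zero (a : ℝ) (S : Set ℕ) : stepSeq a 0 S = constSeq a :=
  eq_constSeq_iff.mpr fun n => by
    by_cases hn : n ∈ S
    · simp [stepSeq_apply_of_mem hn]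
    · simp [stepSeq_apply_of_notMem hn]

theorem dist_stepSeq_constSeq_le (a t : ℝ) (S : Set ℕ) :
    dist (stepSeq a t S) (constSeq a) ≤ |t| :=
  lp.dist_le_of_forall_norm_apply_sub_le (abs_nonneg t) fun n => by
    by_cases hn : n ∈ S
    · simp [stepSeq_apply_of_mem hn]
    · simp [stepSeq_apply_of_notMem hn]

theorem abs_le_dist_stepSeq (a t : ℝ) {S S' : Set ℕ} (h : S ≠ S') :
    |t| ≤ dist (stepSeq a t S) (stepSeq a t S') := by
  obtain ⟨n, hn⟩ : ∃ n, ¬(n ∈ S ↔ n ∈ S') := not_forall.mp (mt Set.ext h)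
  refine le_trans (le_of_eq ?_) (lp.norm_apply_sub_le_dist _ _ n)
  by_cases hS : n ∈ S
  · have hS' : n ∉ S' := fun hS' => hn (iff_of_true hS hS')
    simp [stepSeq_apply_of_mem hS, stepSeq_apply_of_notMem hS']
  · have hS' : n ∈ S' := by_contra fun hS' => hn (iff_of_false hS hS')
    simp [stepSeq_apply_of_notMem hS, stepSeq_apply_of_mem hS']

theorem stepSeq_injective (a : ℝ) {t : ℝ} (ht : t ≠ 0) : Function.Injective (stepSeq a t) :=
  fun S S' h => by_contra fun hne => by
    simpa [h, ht] using abs_le_dist_stepSeq a t hne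

/-- Since `1 / 0 = 0` in Lean, level `0` consists of the constant sequence `a` alone. -/
noncomputable def rankTwoLevel (a : ℝ) (m : ℕ) : Set ℓ^∞(ℕ, ℝ) :=
  stepSeq a (1 / m) '' {S | S.Infinite}

theorem rankTwoSet_eq_iUnion (a : ℝ) : rankTwoSet a = ⋃ m, rankTwoLevel a m := by
  ext x
  simp only [rankTwoSet, rankTwoLevel, mem_ofPred_eq, mem_iUnion, mem_image]
  constructor
  · rintro (hx | ⟨m, -, S, hS, hxS, hxSc⟩)
    · refine ⟨0, univ, infinite_univ, ?_⟩
      rw [Nat.cast_zero, div_zero, stepSeq_zero, eq_comm, eq_constSeq_iff]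
      exact hx
    · refine ⟨m, S, hS, lp.ext (funext fun n => ?_)⟩
      by_cases hn : n ∈ S
      · rw [stepSeq_apply_of_mem hn, hxS n hn]
      · rw [stepSeq_apply_of_notMem hn, hxSc n hn]
  · rintro ⟨m, S, hS, rfl⟩
    rcases eq_or_ne m 0 with rfl | hm
    · left
      simp [stepSeq_zero]
    · exact Or.inr ⟨m, Nat.pos_of_ne_zero hm, S, hS, fun _ => stepSeq_apply_of_mem,
        fun _ => stepSeq_apply_of_notMem⟩

theorem rankTwoLevel_subset_closedBall (a : ℝ) (m : ℕ) :
    rankTwoLevel a m ⊆ closedBall (constSeq a) (1 / m) := by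
  rintro _ ⟨S, -, rfl⟩
  simpa using dist_stepSeq_constSeq_le a (1 / m) S

theorem rankTwoLevel_pairwise_le_dist (a : ℝ) (m : ℕ) :
    (rankTwoLevel a m).Pairwise fun x y => 1 / (m : ℝ) ≤ dist x y := by
  rintro _ ⟨S, -, rfl⟩ _ ⟨S', -, rfl⟩ hne
  simpa using abs_le_dist_stepSeq a (1 / m) (ne_of_apply_ne _ hne)

theorem not_countable_rankTwoLevel (a : ℝ) {m : ℕ} (hm : m ≠ 0) :
    ¬(rankTwoLevel a m).Countable := fun h =>
  not_countable_setOf_infinite <| (h.preimage (stepSeq_injective a (by positivity))).mono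
    (subset_preimage_image _ _)

theorem concrete_rank_two_set (a : ℝ) :
    IsClosed (rankTwoSet a) ∧ ¬(rankTwoSet a).Countable ∧
      CD _ (rankTwoSet a) = {x : lp (fun _ : ℕ => ℝ) ⊤ | ∀ n, x n = a} := by
  have hε : Tendsto (fun m : ℕ => 1 / (m : ℝ)) cofinite (𝓝 0) :=
    Nat.cofinite_eq_atTop ▸ tendsto_one_div_atTop_nhds_zero_nat
  have hlocal : ∀ p ≠ constSeq a, ∃ r > 0, (ball p r ∩ rankTwoSet a).Finite := fun p hp => by
    rw [rankTwoSet_eq_iUnion]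
    exact exists_ball_inter_iUnion_finite hε (rankTwoLevel_subset_closedBall a)
      (rankTwoLevel_pairwise_le_dist a) hp
  have hconst : constSeq a ∈ CD _ (rankTwoSet a) :=
    mem_CD_of_tendsto hε (rankTwoLevel_subset_closedBall a)
      (fun m => rankTwoSet_eq_iUnion a ▸ subset_iUnion _ m)
      ((eventually_cofinite_ne 0).mono fun _ => not_countable_rankTwoLevel a)
  refine ⟨isClosed_of_forall_notMem_exists_finite_inter fun p hp => ?_,
    fun h => hconst univ univ_mem (by simpa using h), ?_⟩
  · obtain ⟨r, hr, hfin⟩ := hlocal p fun hpc => hp (hpc ▸ Or.inl fun _ => rfl)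
    exact ⟨_, ball_mem_nhds p hr, hfin⟩
  · ext p
    rw [mem_ofPred_eq, ← eq_constSeq_iff]
    refine ⟨fun hp => by_contra fun hpc => ?_, fun hpc => hpc ▸ hconst⟩
    obtain ⟨r, hr, hfin⟩ := hlocal p hpc
    exact hp _ (ball_mem_nhds p hr) hfin.countable
end

section
/- For every countable ordinal α < ω₁ there exists a closed subset A of ℓ∞ such that CD^α(A) ≠ ∅ and CD^{α+1}(A) = ∅; consequently the condensation rank of ℓ∞ is at least ω₁, the first uncountable ordinal. -/
/-- Transfinite iterates of the condensation derivative. -/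
noncomputable def CDiter (X : Type*) [TopologicalSpace X] (A : Set X) : Ordinal → Set X :=
  fun o => Ordinal.limitRecOn o A (fun _ ih => CD X ih)
    (fun o _ ih => ⋂ (b : Set.Iio o), ih b.1 b.2)

open Set Metric

section lpInfty

variable {ι : Type*} {E : ι → Type*} [∀ i, NormedAddCommGroup (E i)]

theorem lp.dist_apply_le (x y : lp E ⊤) (i : ι) : dist (x i) (y i) ≤ dist x y := by
  simpa only [dist_eq_norm, lp.coeFn_sub, Pi.sub_apply] using
    lp.norm_apply_le_norm ENNReal.top_ne_zero (x - y) i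

theorem lp.dist_le_of_forall_dist_le {x y : lp E ⊤} {C : ℝ} (hC : 0 ≤ C)
    (h : ∀ i, dist (x i) (y i) ≤ C) : dist x y ≤ C := by
  rw [dist_eq_norm]
  refine lp.norm_le_of_forall_le hC fun i => ?_
  simpa only [dist_eq_norm, lp.coeFn_sub, Pi.sub_apply] using h i

end lpInfty

theorem CD_subset_closure {X : Type*} [TopologicalSpace X] (A : Set X) : CD X A ⊆ closure A :=
  fun _ hx => mem_closure_iff_nhds.2 fun U hU =>
    nonempty_iff_ne_empty.2 fun h => hx U hU (h ▸ countable_empty)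

theorem not_countable_of_injective_of_range_subset {X : Type*} {A : Set X} {g : Set ℕ → X}
    (hg : Function.Injective g) (h : range g ⊆ A) : ¬A.Countable := fun hA => by
  obtain ⟨f, hf⟩ := countable_iff_exists_injOn.1 (hA.mono h)
  exact Function.cantor_injective (f ∘ g) fun S T hST =>
    hg (hf (mem_range_self S) (mem_range_self T) hST)

theorem CDiter_zero (X : Type*) [TopologicalSpace X] (A : Set X) : CDiter X A 0 = A := by
  simp only [CDiter, Ordinal.limitRecOn_zero]

theorem CDiter_add_one (X : Type*) [TopologicalSpace X] (A : Set X) (o : Ordinal) :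
    CDiter X A (o + 1) = CD X (CDiter X A o) := by
  simp only [CDiter, Ordinal.limitRecOn_add_one]

theorem CDiter_limit (X : Type*) [TopologicalSpace X] (A : Set X) {o : Ordinal}
    (h : Order.IsSuccLimit o) : CDiter X A o = ⋂ b : Iio o, CDiter X A b := by
  simp only [CDiter]
  rw [Ordinal.limitRecOn_limit _ _ _ _ h]

theorem Set.Countable.exists_nat_infinite_fibers {β : Type*} {s : Set β} (hs : s.Countable)
    (hne : s.Nonempty) : ∃ ρ : ℕ → β, ∀ b ∈ s, {k | ρ k = b}.Infinite := by
  obtain ⟨g, rfl⟩ := hs.exists_eq_range hne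
  refine ⟨fun k => g k.unpair.1, ?_⟩
  rintro _ ⟨i, rfl⟩
  exact infinite_of_injective_forall_mem (f := Nat.pair i)
    (fun a b h => (Nat.pair_eq_pair.1 h).2) (by simp)

theorem Ordinal.countable_Iic_of_lt_ord_aleph_one {α : Ordinal} (h : α < (Cardinal.aleph 1).ord) :
    (Iic α).Countable := by
  have hs : Order.succ α < (Cardinal.aleph 1).ord :=
    (Cardinal.isSuccLimit_ord (Cardinal.aleph0_le_aleph 1)).succ_lt h
  rw [← Order.Iio_succ, ← Cardinal.le_aleph0_iff_set_countable, Cardinal.mk_Iio_ordinal,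
    Cardinal.lift_le_aleph0, ← Cardinal.lt_aleph_one_iff, ← Cardinal.lt_ord]
  exact hs

theorem List.exists_eq_append_head?_ne {α : Type*} :
    ∀ {l m : List α}, l ≠ m → ∃ p t₁ t₂, l = p ++ t₁ ∧ m = p ++ t₂ ∧ t₁.head? ≠ t₂.head?
  | a :: l, b :: m, h => by
    by_cases hab : a = b
    · subst hab
      obtain ⟨p, t₁, t₂, rfl, rfl, ht⟩ :=
        List.exists_eq_append_head?_ne (l := l) (m := m) fun hlm => h (by rw [hlm])
      exact ⟨a :: p, t₁, t₂, rfl, rfl, ht⟩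
    · exact ⟨[], a :: l, b :: m, rfl, rfl, by simpa using hab⟩
  | [], m, h => ⟨[], [], m, rfl, rfl, by simpa [eq_comm] using h⟩
  | l, [], h => ⟨[], l, [], rfl, rfl, by simpa using h⟩

namespace LinftyCondensation

local notation "ℓ∞" => lp (fun _ : ℕ => ℝ) ⊤

abbrev Label := ℕ × Set ℕ

noncomputable def weight (e : Label) : ℝ := 2⁻¹ ^ (e.1 + 1)

noncomputable def row (e : Label) : ℕ → ℝ
  | 0 => weight e
  | j + 1 => e.2.indicator (fun _ => weight e) j

/-- `coord l i j` is coordinate `j` of the `i`-th block of `point l`: the row of the `i`-th label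
of `l`, scaled by the weights of the labels before it. -/
noncomputable def coord : List Label → ℕ → ℕ → ℝ
  | [], _, _ => 0
  | e :: _, 0, j => row e j
  | e :: t, i + 1, j => weight e * coord t i j

noncomputable def headWeight : List Label → ℝ
  | [] => 0
  | e :: _ => weight e

noncomputable def scale (l : List Label) : ℝ := (l.map weight).prod

theorem weight_pos (e : Label) : 0 < weight e := by unfold weight; positivity

theorem weight_le_one (e : Label) : weight e ≤ 1 := pow_le_one₀ (by norm_num) (by norm_num)

theorem headWeight_nonneg (t : List Label) : 0 ≤ headWeight t := by
  cases t
  exacts [le_rfl, (weight_pos _).le]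

theorem headWeight_le_one (t : List Label) : headWeight t ≤ 1 := by
  cases t
  exacts [zero_le_one, weight_le_one _]

theorem row_nonneg (e : Label) (j : ℕ) : 0 ≤ row e j := by
  cases j with
  | zero => exact (weight_pos e).le
  | succ j => exact Set.indicator_nonneg (fun _ _ => (weight_pos e).le) j

theorem row_le_weight (e : Label) (j : ℕ) : row e j ≤ weight e := by
  cases j with
  | zero => exact le_rfl
  | succ j => exact Set.indicator_le_self' (fun _ _ => (weight_pos e).le) j

theorem coord_nonneg (t : List Label) (i j : ℕ) : 0 ≤ coord t i j := by
  induction t generalizing i with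
  | nil => exact le_rfl
  | cons e t ih =>
    cases i with
    | zero => exact row_nonneg e j
    | succ i => exact mul_nonneg (weight_pos e).le (ih i)

theorem coord_le_headWeight (t : List Label) (i j : ℕ) : coord t i j ≤ headWeight t := by
  induction t generalizing i with
  | nil => exact le_rfl
  | cons e t ih =>
    cases i with
    | zero => exact row_le_weight e j
    | succ i => exact mul_le_of_le_one_right (weight_pos e).le ((ih i).trans (headWeight_le_one t))

theorem coord_le_one (t : List Label) (i j : ℕ) : coord t i j ≤ 1 :=
  (coord_le_headWeight t i j).trans (headWeight_le_one t)

theorem scale_pos (l : List Label) : 0 < scale l :=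
  List.prod_pos fun _ h => by
    obtain ⟨e, -, rfl⟩ := List.mem_map.1 h
    exact weight_pos e

theorem scale_le_one (l : List Label) : scale l ≤ 1 := by
  induction l with
  | nil => simp [scale]
  | cons e l ih =>
    simpa [scale] using mul_le_one₀ (weight_le_one e) (scale_pos l).le ih

theorem scale_append (l t : List Label) : scale (l ++ t) = scale l * scale t := by
  simp [scale]

theorem scale_append_singleton (l : List Label) (e : Label) :
    scale (l ++ [e]) = scale l * weight e := by
  simp [scale]

theorem coord_append_of_lt {p : List Label} {i : ℕ} (hi : i < p.length) (t : List Label) (j : ℕ) :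
    coord (p ++ t) i j = coord p i j := by
  induction p generalizing i with
  | nil => simp at hi
  | cons e p ih =>
    cases i with
    | zero => rfl
    | succ i => simp only [List.cons_append, coord, ih (by simpa using hi)]

theorem coord_append_length_add (p t : List Label) (i j : ℕ) :
    coord (p ++ t) (p.length + i) j = scale p * coord t i j := by
  induction p with
  | nil => simp [scale]
  | cons e p ih =>
    rw [List.cons_append, List.length_cons, Nat.add_right_comm, coord, ih]
    simp [scale, mul_assoc]

noncomputable def point (l : List Label) : ℓ∞ :=
  ⟨fun k => coord l k.unpair.1 k.unpair.2, memℓp_infty ⟨1, by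
    rintro _ ⟨k, rfl⟩
    exact (Real.norm_of_nonneg (coord_nonneg ..)).trans_le (coord_le_one ..)⟩⟩

theorem point_pair (l : List Label) (i j : ℕ) : point l (Nat.pair i j) = coord l i j := by
  simp [point]

theorem dist_point_le_of_forall {l m : List Label} {C : ℝ} (hC : 0 ≤ C)
    (h : ∀ i j, |coord l i j - coord m i j| ≤ C) : dist (point l) (point m) ≤ C :=
  lp.dist_le_of_forall_dist_le hC fun k => by
    rw [← Nat.pair_unpair k, point_pair, point_pair, Real.dist_eq]
    exact h _ _

theorem abs_coord_sub_le_dist (l m : List Label) (i j : ℕ) :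
    |coord l i j - coord m i j| ≤ dist (point l) (point m) := by
  simpa [point_pair, Real.dist_eq] using lp.dist_apply_le (point l) (point m) (Nat.pair i j)

theorem dist_point_append (p t₁ t₂ : List Label) :
    dist (point (p ++ t₁)) (point (p ++ t₂)) = scale p * dist (point t₁) (point t₂) := by
  have hp := scale_pos p
  have shifted (i j : ℕ) : |coord (p ++ t₁) (p.length + i) j - coord (p ++ t₂) (p.length + i) j|
      = scale p * |coord t₁ i j - coord t₂ i j| := by
    rw [coord_append_length_add, coord_append_length_add, ← mul_sub, abs_mul, abs_of_pos hp]
  apply le_antisymm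
  · refine dist_point_le_of_forall (by positivity) fun i j => ?_
    rcases lt_or_ge i p.length with hi | hi
    · rw [coord_append_of_lt hi, coord_append_of_lt hi, sub_self, abs_zero]
      positivity
    · obtain ⟨i, rfl⟩ := Nat.exists_eq_add_of_le hi
      rw [shifted]
      exact mul_le_mul_of_nonneg_left (abs_coord_sub_le_dist t₁ t₂ i j) hp.le
  · rw [← le_div_iff₀' hp]
    refine dist_point_le_of_forall (by positivity) fun i j => ?_
    rw [le_div_iff₀' hp, ← shifted]
    exact abs_coord_sub_le_dist _ _ _ _

theorem dist_point_le_max (t₁ t₂ : List Label) :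
    dist (point t₁) (point t₂) ≤ max (headWeight t₁) (headWeight t₂) :=
  dist_point_le_of_forall (le_max_of_le_left (headWeight_nonneg t₁)) fun _ _ =>
    abs_sub_le_of_nonneg_of_le (coord_nonneg ..)
      ((coord_le_headWeight ..).trans (le_max_left ..)) (coord_nonneg ..)
      ((coord_le_headWeight ..).trans (le_max_right ..))

theorem half_max_weight_le_abs_sub {e₁ e₂ : Label} (h : e₁.1 ≠ e₂.1) :
    max (weight e₁) (weight e₂) / 2 ≤ |weight e₁ - weight e₂| := by
  wlog hlt : e₁.1 < e₂.1 generalizing e₁ e₂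
  · rw [max_comm, abs_sub_comm]
    exact this h.symm (lt_of_le_of_ne (not_lt.1 hlt) h.symm)
  have hle : weight e₂ ≤ weight e₁ * 2⁻¹ := by
    rw [weight, weight, ← pow_succ]
    exact pow_le_pow_of_le_one (by norm_num) (by norm_num) (by omega)
  rw [max_eq_left (by linarith [weight_pos e₁]), abs_of_nonneg (by linarith [weight_pos e₂])]
  linarith [weight_pos e₂]

theorem exists_half_max_weight_le_abs_row_sub {e₁ e₂ : Label} (h : e₁ ≠ e₂) :
    ∃ j, max (weight e₁) (weight e₂) / 2 ≤ |row e₁ j - row e₂ j| := by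
  by_cases hk : e₁.1 = e₂.1
  · obtain ⟨k, S₁⟩ := e₁
    obtain ⟨k', S₂⟩ := e₂
    obtain rfl : k = k' := hk
    have hS : S₁ ≠ S₂ := fun hS => h (by rw [hS])
    obtain ⟨m, hm⟩ := Set.symmDiff_nonempty.2 hS
    refine ⟨m + 1, ?_⟩
    rcases Set.mem_symmDiff.1 hm with ⟨h₁, h₂⟩ | ⟨h₂, h₁⟩ <;> simp [row, weight, h₁, h₂]
  · exact ⟨0, half_max_weight_le_abs_sub hk⟩

theorem half_max_headWeight_le_dist {t₁ t₂ : List Label} (h : t₁.head? ≠ t₂.head?) :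
    max (headWeight t₁) (headWeight t₂) / 2 ≤ dist (point t₁) (point t₂) := by
  match t₁, t₂, h with
  | [], [], h => exact absurd rfl h
  | [], e :: r, _ =>
    have := abs_coord_sub_le_dist [] (e :: r) 0 0
    simp only [coord, row, zero_sub, abs_neg, abs_of_pos (weight_pos e)] at this
    simp only [headWeight, max_eq_right (weight_pos e).le]
    linarith [weight_pos e]
  | e :: r, [], _ =>
    have := abs_coord_sub_le_dist (e :: r) [] 0 0
    simp only [coord, row, sub_zero, abs_of_pos (weight_pos e)] at this
    simp only [headWeight, max_eq_left (weight_pos e).le]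
    linarith [weight_pos e]
  | e₁ :: r₁, e₂ :: r₂, h =>
    obtain ⟨j, hj⟩ := exists_half_max_weight_le_abs_row_sub (e₁ := e₁) (e₂ := e₂) (by simpa using h)
    exact hj.trans (abs_coord_sub_le_dist (e₁ :: r₁) (e₂ :: r₂) 0 j)

theorem half_scale_le_dist_of_not_isPrefix {l m₀ m : List Label} (hl : l <+: m₀) (hm : ¬l <+: m) :
    scale l / 2 ≤ dist (point m₀) (point m) := by
  obtain ⟨p, t₁, t₂, rfl, rfl, ht⟩ :=
    List.exists_eq_append_head?_ne fun h : l = m => hm (h ▸ List.prefix_refl l)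
  obtain ⟨e, r, rfl⟩ : ∃ e r, t₁ = e :: r := by
    cases t₁ with
    | nil => exact absurd (by simp) hm
    | cons e r => exact ⟨e, r, rfl⟩
  obtain ⟨s, rfl⟩ := hl
  have hscale : scale (p ++ e :: r) ≤ scale p * max (weight e) (headWeight t₂) := by
    rw [scale_append]
    refine mul_le_mul_of_nonneg_left ?_ (scale_pos p).le
    simpa [scale] using
      (mul_le_of_le_one_right (weight_pos e).le (scale_le_one r)).trans (le_max_left _ _)
  calc scale (p ++ e :: r) / 2
      ≤ scale p * (max (headWeight (e :: (r ++ s))) (headWeight t₂) / 2) := by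
        rw [headWeight]
        linarith
    _ ≤ scale p * dist (point (e :: (r ++ s))) (point t₂) :=
        mul_le_mul_of_nonneg_left (half_max_headWeight_le_dist (by simpa using ht))
          (scale_pos p).le
    _ = dist (point (p ++ e :: r ++ s)) (point (p ++ t₂)) := by
        rw [← dist_point_append]
        simp

theorem dist_point_append_cons_le (l r : List Label) (e : Label) :
    dist (point (l ++ e :: r)) (point l) ≤ scale (l ++ [e]) := by
  calc dist (point (l ++ e :: r)) (point l)
      = scale l * dist (point (e :: r)) (point []) := by
        rw [← dist_point_append, List.append_nil]
    _ ≤ scale l * weight e := by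
        refine mul_le_mul_of_nonneg_left ?_ (scale_pos l).le
        simpa [headWeight, (weight_pos e).le] using dist_point_le_max (e :: r) []
    _ = scale (l ++ [e]) := (scale_append_singleton l e).symm

theorem point_injective : Function.Injective point := by
  have prefix_of_eq {l m : List Label} (h : point l = point m) : l <+: m := by
    by_contra hlm
    have := half_scale_le_dist_of_not_isPrefix (List.prefix_refl l) hlm
    rw [h, dist_self] at this
    linarith [scale_pos l]
  intro l m h
  exact (prefix_of_eq h).eq_of_length
    (le_antisymm (prefix_of_eq h).length_le (prefix_of_eq h.symm).length_le)

theorem exists_mem_closure_image_prefix {s : Set (List Label)} {x : ℓ∞} {l : List Label}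
    (hx : x ∈ closure (point '' {m ∈ s | l <+: m})) (hxl : x ≠ point l) :
    ∃ e, x ∈ closure (point '' {m ∈ s | l ++ [e] <+: m}) := by
  -- Points of `s` within `δ / 8` of `x` are almost `δ` away from `point l`, so their first label
  -- after `l` is heavy, and two of them that branch there would be at least `7 δ / 16` apart.
  set δ := dist x (point l)
  have hδ : 0 < δ := dist_pos.2 hxl
  obtain ⟨_, ⟨_, ⟨-, t, rfl⟩, rfl⟩, ht⟩ := Metric.mem_closure_iff.1 hx (δ / 8) (by positivity)
  obtain ⟨e, r, rfl⟩ : ∃ e r, t = e :: r := by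
    cases t with
    | nil => simp only [List.append_nil] at ht; linarith
    | cons e r => exact ⟨e, r, rfl⟩
  have hbig : 7 * δ / 8 ≤ scale (l ++ [e]) := by
    have := dist_point_append_cons_le l r e
    have := dist_triangle x (point (l ++ e :: r)) (point l)
    linarith
  refine ⟨e, Metric.mem_closure_iff.2 fun ε hε => ?_⟩
  obtain ⟨_, ⟨m, ⟨hms, -⟩, rfl⟩, hm⟩ :=
    Metric.mem_closure_iff.1 hx (min ε (δ / 8)) (by positivity)
  refine ⟨point m, ⟨m, ⟨hms, ?_⟩, rfl⟩, hm.trans_le (min_le_left _ _)⟩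
  by_contra hem
  have := half_scale_le_dist_of_not_isPrefix (by simp : l ++ [e] <+: l ++ e :: r) hem
  have := dist_triangle_left (point (l ++ e :: r)) (point m) x
  have := min_le_right ε (δ / 8)
  linarith

section Tree

variable (ρ : ℕ → Ordinal)

def IsPath : Ordinal → List Label → Prop
  | _, [] => True
  | a, e :: t => ρ e.1 < a ∧ IsPath (ρ e.1) t

def endRank : Ordinal → List Label → Ordinal
  | a, [] => a
  | _, e :: t => endRank (ρ e.1) t

def paths (α γ : Ordinal) : Set (List Label) := {l | IsPath ρ α l ∧ γ ≤ endRank ρ α l}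

noncomputable def pathSet (α γ : Ordinal) : Set ℓ∞ := point '' paths ρ α γ

variable {ρ}

theorem isPath_append {a : Ordinal} {l t : List Label} :
    IsPath ρ a (l ++ t) ↔ IsPath ρ a l ∧ IsPath ρ (endRank ρ a l) t := by
  induction l generalizing a with
  | nil => simp [IsPath, endRank]
  | cons e l ih => simp [IsPath, endRank, ih, and_assoc]

theorem endRank_append (a : Ordinal) (l t : List Label) :
    endRank ρ a (l ++ t) = endRank ρ (endRank ρ a l) t := by
  induction l generalizing a with
  | nil => rfl
  | cons e l ih => exact ih _

theorem endRank_le {a : Ordinal} {l : List Label} (h : IsPath ρ a l) : endRank ρ a l ≤ a := by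
  induction l generalizing a with
  | nil => exact le_rfl
  | cons e l ih => exact (ih h.2).trans h.1.le

theorem endRank_append_lt {a : Ordinal} {l t : List Label} (h : IsPath ρ a (l ++ t))
    (ht : t ≠ []) : endRank ρ a (l ++ t) < endRank ρ a l := by
  obtain ⟨e, r, rfl⟩ := List.exists_cons_of_ne_nil ht
  have h' := (isPath_append.1 h).2
  rw [endRank_append]
  exact (endRank_le h'.2).trans_lt h'.1

theorem IsPath.of_isPrefix {a : Ordinal} {l m : List Label} (hm : IsPath ρ a m) (hlm : l <+: m) :
    IsPath ρ a l := by
  obtain ⟨t, rfl⟩ := hlm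
  exact (isPath_append.1 hm).1

theorem IsPath.endRank_le_of_isPrefix {a : Ordinal} {l m : List Label} (hm : IsPath ρ a m)
    (hlm : l <+: m) : endRank ρ a m ≤ endRank ρ a l := by
  obtain ⟨t, rfl⟩ := hlm
  rw [endRank_append]
  exact endRank_le (isPath_append.1 hm).2

theorem isClosed_pathSet (α γ : Ordinal) : IsClosed (pathSet ρ α γ) := by
  refine isClosed_of_closure_subset fun x hx => ?_
  -- Unless `x = point l`, `x` is approximated through a single child of `l`, of smaller rank.
  suffices key : ∀ o l, endRank ρ α l = o →
      x ∈ closure (point '' {m ∈ paths ρ α γ | l <+: m}) → x ∈ pathSet ρ α γ by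
    exact key _ [] rfl (by simpa [pathSet] using hx)
  intro o
  induction o using WellFoundedLT.induction with
  | _ o ih =>
  rintro l rfl hl
  obtain ⟨_, m, ⟨⟨hm, hγm⟩, hlm⟩, rfl⟩ := closure_nonempty_iff.1 ⟨x, hl⟩
  by_cases hxl : x = point l
  · exact ⟨l, ⟨hm.of_isPrefix hlm, hγm.trans (hm.endRank_le_of_isPrefix hlm)⟩, hxl.symm⟩
  · obtain ⟨e, he⟩ := exists_mem_closure_image_prefix hl hxl
    obtain ⟨_, m', ⟨⟨hm', -⟩, hem'⟩, rfl⟩ := closure_nonempty_iff.1 ⟨x, he⟩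
    exact ih _ (endRank_append_lt (hm'.of_isPrefix hem') (List.cons_ne_nil e [])) _ rfl he

theorem ball_inter_pathSet_subset (α : Ordinal) (l : List Label) :
    ball (point l) (scale l / 2) ∩ pathSet ρ α (endRank ρ α l) ⊆ {point l} := by
  rintro _ ⟨hball, m, ⟨hm, hγ⟩, rfl⟩
  have hlm : l <+: m := by
    by_contra hlm
    have := half_scale_le_dist_of_not_isPrefix (List.prefix_refl l) hlm
    rw [mem_ball, dist_comm] at hball
    linarith
  obtain ⟨t, rfl⟩ := hlm
  rcases eq_or_ne t [] with rfl | ht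
  · simp
  · exact absurd hγ (not_le.2 (endRank_append_lt hm ht))

theorem CD_pathSet_subset (α γ : Ordinal) : CD ℓ∞ (pathSet ρ α γ) ⊆ pathSet ρ α (γ + 1) := by
  intro x hx
  obtain ⟨l, ⟨hl, hγ⟩, rfl⟩ := (isClosed_pathSet α γ).closure_subset (CD_subset_closure _ hx)
  refine ⟨l, ⟨hl, Order.add_one_le_of_lt (lt_of_le_of_ne hγ fun h => ?_)⟩, rfl⟩
  subst h
  exact hx _ (ball_mem_nhds _ (half_pos (scale_pos l)))
    ((countable_singleton _).mono (ball_inter_pathSet_subset α l))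

theorem pathSet_succ_subset_CD {α : Ordinal} (hρ : ∀ β ≤ α, {k | ρ k = β}.Infinite) (γ : Ordinal) :
    pathSet ρ α (γ + 1) ⊆ CD ℓ∞ (pathSet ρ α γ) := by
  rintro _ ⟨l, ⟨hl, hγ⟩, rfl⟩ U hU
  have hγl : γ < endRank ρ α l := Order.add_one_le_iff.1 hγ
  obtain ⟨ε, hε, hball⟩ := Metric.mem_nhds_iff.1 hU
  obtain ⟨N, hN⟩ := exists_pow_lt_of_lt_one hε (by norm_num : (2⁻¹ : ℝ) < 1)
  obtain ⟨k, hk : ρ k = γ, hNk⟩ := (hρ γ (hγl.le.trans (endRank_le hl))).exists_gt N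
  refine not_countable_of_injective_of_range_subset (g := fun S => point (l ++ [(k, S)]))
    (fun S T h => by simpa using point_injective h) ?_
  rintro _ ⟨S, rfl⟩
  refine ⟨hball ?_, l ++ [(k, S)], ⟨?_, ?_⟩, rfl⟩
  · rw [mem_ball]
    calc dist (point (l ++ [(k, S)])) (point l)
        ≤ scale l * weight (k, S) :=
          (dist_point_append_cons_le l [] (k, S)).trans_eq (scale_append_singleton ..)
      _ ≤ weight (k, S) := mul_le_of_le_one_left (weight_pos _).le (scale_le_one l)
      _ ≤ 2⁻¹ ^ N := pow_le_pow_of_le_one (by norm_num) (by norm_num) (by omega)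
      _ < ε := hN
  · exact isPath_append.2 ⟨hl, by simpa [IsPath, hk] using hγl⟩
  · simp [endRank_append, endRank, hk]

theorem CD_pathSet {α : Ordinal} (hρ : ∀ β ≤ α, {k | ρ k = β}.Infinite) (γ : Ordinal) :
    CD ℓ∞ (pathSet ρ α γ) = pathSet ρ α (γ + 1) :=
  (CD_pathSet_subset α γ).antisymm (pathSet_succ_subset_CD hρ γ)

theorem iInter_pathSet_of_isSuccLimit {α o : Ordinal} (ho : Order.IsSuccLimit o) :
    ⋂ b : Iio o, pathSet ρ α b = pathSet ρ α o := by
  have : Nonempty (Iio o) := ⟨⟨0, ho.bot_lt⟩⟩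
  simp only [pathSet]
  rw [← point_injective.injOn.image_iInter_eq]
  congr 1
  ext m
  simp only [mem_iInter, paths, Subtype.forall, mem_Iio]
  constructor
  · intro h
    exact ⟨(h 0 ho.bot_lt).1, ho.le_iff_forall_le.2 fun b hb => (h b hb).2⟩
  · rintro ⟨hm, hom⟩ b hb
    exact ⟨hm, hb.le.trans hom⟩

theorem CDiter_pathSet {α : Ordinal} (hρ : ∀ β ≤ α, {k | ρ k = β}.Infinite) (γ : Ordinal) :
    CDiter ℓ∞ (pathSet ρ α 0) γ = pathSet ρ α γ := by
  induction γ using Ordinal.limitRecOn with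
  | zero => exact CDiter_zero ..
  | add_one β ih => rw [CDiter_add_one, ih, CD_pathSet hρ]
  | limit o ho ih =>
    rw [CDiter_limit _ _ ho, ← iInter_pathSet_of_isSuccLimit ho]
    exact iInter_congr fun b => ih b b.2

end Tree

end LinftyCondensation

open LinftyCondensation in
theorem linfty_rank_ge_omega1 :
    ∀ α : Ordinal, α < (Cardinal.aleph 1).ord →
      ∃ A : Set (lp (fun _ : ℕ => ℝ) ⊤), IsClosed A ∧
        CDiter _ A α ≠ ∅ ∧ CDiter _ A (α + 1) = ∅ := by
  intro α hα
  obtain ⟨ρ, hρ⟩ :=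
    (Ordinal.countable_Iic_of_lt_ord_aleph_one hα).exists_nat_infinite_fibers nonempty_Iic
  refine ⟨pathSet ρ α 0, isClosed_pathSet α 0, ?_, ?_⟩
  · rw [CDiter_pathSet hρ]
    exact Nonempty.ne_empty ⟨point [], [], ⟨trivial, le_rfl⟩, rfl⟩
  · rw [CDiter_pathSet hρ, eq_empty_iff_forall_notMem]
    rintro _ ⟨l, ⟨hl, hαl⟩, -⟩
    exact (Order.lt_add_one_iff.2 (endRank_le hl)).not_ge hαl
end
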